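/- Failure of the finite model property: let A ∈ N_C, r ∈ N_R, x ∈ Reg, and let T be the TBox consisting of the single axiom (A ⊔ ¬A) ⊑ ∃r.⟦S^0 x < S^1 x⟧ (that is, ⊤ ⊑ ∃r.⟦S^0 x < S^1 x⟧). Then the concept A ⊔ ¬A is satisfiable with respect to T, and every model of T has an infinite domain Δ; in particular ALCF^P(Z_c) does not have the finite model property. -/
import Mathlib


namespace ALCFPZ

/-! Syntax of ALCF^P(Z_c).  Concept names, role names and registers are natural
numbers; the functional role names are the even role names. -/

/-- Constraints.  `eqT i x j y` is `S^i x = S^j y`, `ltT i x j y` is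
`S^i x < S^j y`, and `eqC i x c` is `S^i x = c`. -/
inductive Constr where
  | eqT : ℕ → ℕ → ℕ → ℕ → Constr
  | ltT : ℕ → ℕ → ℕ → ℕ → Constr
  | eqC : ℕ → ℕ → ℤ → Constr
  | not : Constr → Constr
  | and : Constr → Constr → Constr
  | or : Constr → Constr → Constr
deriving DecidableEq

/-- The depth of a constraint: the maximal `d` such that `S^d x` occurs in it. -/
def Constr.depth : Constr → ℕ
  | .eqT i _ j _ => max i j
  | .ltT i _ j _ => max i j
  | .eqC i _ _ => i
  | .not θ => θ.depth
  | .and θ₁ θ₂ => max θ₁.depth θ₂.depth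
  | .or θ₁ θ₂ => max θ₁.depth θ₂.depth

/-- Concepts.  `atom A` is a concept name, `inter` is `⊓`, `ex r C` is `∃r.C`,
and `exP P θ` is the path constraint `∃P.⟦θ⟧`. -/
inductive Concept where
  | atom : ℕ → Concept
  | neg : Concept → Concept
  | inter : Concept → Concept → Concept
  | ex : ℕ → Concept → Concept
  | exP : List ℕ → Constr → Concept
deriving DecidableEq

/-- `C ⊔ D` as the abbreviation `¬(¬C ⊓ ¬D)`. -/
def Concept.or' (C D : Concept) : Concept := .neg (.inter (.neg C) (.neg D))

/-- Well-formedness: in every path constraint `∃P.⟦θ⟧` the depth of `θ` is at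
most `|P|`. -/
def Concept.wf : Concept → Prop
  | .atom _ => True
  | .neg C => C.wf
  | .inter C D => C.wf ∧ D.wf
  | .ex _ C => C.wf
  | .exP P θ => θ.depth ≤ P.length

/-- An interpretation with domain `Δ`: interpretations of concept names, role
names (with the even, i.e. functional, role names interpreted functionally), and
a register function assigning integers. -/
structure Interp (Δ : Type) where
  conc : ℕ → Set Δ
  role : ℕ → Δ → Δ → Prop
  reg : Δ → ℕ → ℤ
  func : ∀ r : ℕ, r % 2 = 0 → ∀ v v' v'' : Δ, role r v v' → role r v v'' → v' = v''

variable {Δ : Type}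

/-- Satisfaction of a constraint by a tuple `σ 0, σ 1, …` of domain elements. -/
def Constr.sat (I : Interp Δ) (σ : ℕ → Δ) : Constr → Prop
  | .eqT i x j y => I.reg (σ i) x = I.reg (σ j) y
  | .ltT i x j y => I.reg (σ i) x < I.reg (σ j) y
  | .eqC i x c => I.reg (σ i) x = c
  | .not θ => ¬ θ.sat I σ
  | .and θ₁ θ₂ => θ₁.sat I σ ∧ θ₂.sat I σ
  | .or θ₁ θ₂ => θ₁.sat I σ ∨ θ₂.sat I σ

/-- `(σ 0, …, σ |P|) ∈ P^I` : consecutive elements are related by the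
corresponding roles of the role path `P`. -/
def chainOf (I : Interp Δ) (P : List ℕ) (σ : ℕ → Δ) : Prop :=
  ∀ (i : ℕ) (h : i < P.length), I.role (P.get ⟨i, h⟩) (σ i) (σ (i + 1))

/-- The semantics of concepts. -/
def Concept.sem (I : Interp Δ) : Concept → Set Δ
  | .atom A => I.conc A
  | .neg C => (C.sem I)ᶜ
  | .inter C D => C.sem I ∩ D.sem I
  | .ex r C => {v | ∃ v', I.role r v v' ∧ v' ∈ C.sem I}
  | .exP P θ => {u | ∃ σ : ℕ → Δ, σ 0 = u ∧ chainOf I P σ ∧ θ.sat I σ}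

/-- A TBox: a finite list of axioms `C ⊑ D`. -/
abbrev TBox := List (Concept × Concept)

/-- `I` is a model of the TBox `T`. -/
def IsModel (I : Interp Δ) (T : TBox) : Prop :=
  ∀ ax ∈ T, (ax.1.sem I : Set Δ) ⊆ ax.2.sem I

/-- `C` is satisfiable with respect to the TBox `T`. -/
def Satisfiable (C : Concept) (T : TBox) : Prop :=
  ∃ (Δ' : Type) (_ : Nonempty Δ') (I : Interp Δ'), IsModel I T ∧ (Concept.sem I C).Nonempty

/-- An interpretation with domain `[n]*` is an `n`-tree interpretation:
two nodes are related by some role iff the second is a child of the first. -/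
def IsTree (n : ℕ) (I : Interp (List (Fin n))) : Prop :=
  ∀ u v : List (Fin n), (∃ r : ℕ, I.role r u v) ↔ ∃ γ : Fin n, v = u ++ [γ]

/-- failure of the finite model property: for the TBox with the
single axiom `(A ⊔ ¬A) ⊑ ∃r.⟦S⁰x < S¹x⟧`, the concept `A ⊔ ¬A` is satisfiable
w.r.t. the TBox, and every model of the TBox has an infinite domain. -/
theorem no_finite_model_property (A r x : ℕ) :
    Satisfiable (Concept.or' (.atom A) (.neg (.atom A)))
        [(Concept.or' (.atom A) (.neg (.atom A)), Concept.exP [r] (.ltT 0 x 1 x))] ∧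
    ∀ (Δ : Type) (I : Interp Δ), Nonempty Δ →
      IsModel I [(Concept.or' (.atom A) (.neg (.atom A)), Concept.exP [r] (.ltT 0 x 1 x))] →
      Infinite Δ := by

  constructor
  · refine ⟨ℤ, ⟨0⟩, ⟨fun _ => Set.univ, fun _ u v => v = u + 1, fun v _ => v,
      fun _ _ _ _ _ h1 h2 => h1.trans h2.symm⟩, ?_, ?_⟩
    · intro ax hax v _
      simp only [List.mem_singleton] at hax
      subst hax
      refine ⟨fun i => v + i, by simp, ?_, ?_⟩
      · intro i hi
        simp only [List.length_singleton] at hi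
        interval_cases i
        simp [Int.add_comm]
      · show (v : ℤ) + 0 < v + 1
        omega
    · refine ⟨0, ?_⟩
      show (0:ℤ) ∉ _ ∩ _
      simp [Concept.sem]
  · intro Δ I hne hmod
    obtain ⟨v₀⟩ := hne
    have key : ∀ v : Δ, ∃ v' : Δ, I.reg v x < I.reg v' x := by
      intro v
      have hv : v ∈ Concept.sem I (Concept.or' (.atom A) (.neg (.atom A))) := by
        show v ∉ _ ∩ _
        intro ⟨h1, h2⟩
        exact h2 h1
      obtain ⟨σ, hσ0, _, hsat⟩ := hmod _ (List.mem_singleton.mpr rfl) hv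
      exact ⟨σ 1, by rw [← hσ0]; exact hsat⟩
    choose f hf using key
    have mono : StrictMono (fun n => I.reg (f^[n] v₀) x) := by
      apply strictMono_nat_of_lt_succ
      intro n
      simp only [Function.iterate_succ', Function.comp_apply]
      exact hf _
    exact Infinite.of_injective (fun n => f^[n] v₀)
      (fun a b hab => mono.injective (by simp only [] at hab; rw [hab]))


end ALCFPZ
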